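/- Let 𝒴 ⊂ ℝ be a finite set, let 𝒜, 𝒰, 𝒱 be finite types, let p be a strictly positive probability mass function on 𝒴 × 𝒜 × 𝒰 × 𝒱, and fix a ∈ 𝒜. Let S : 𝒴 × 𝒜 × 𝒰 × 𝒱 → ℝ satisfy ∑_o p(o)·S(o) = 0, and for real t set p_t(o) := p(o)·(1 + t·S(o)). Then there is ε > 0 such that for all |t| < ε, p_t is a strictly positive probability mass function, and the map t ↦ T_a(p_t) is differentiable at t = 0 with derivative ∑_o p(o)·ψ_a(o)·S(o), where T_a(p_t) is the target parameter computed from p_t and ψ_a is the influence function computed from p. -/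

import Mathlib

/-!
Along `p_t = p + t • (p S)` every marginal of `p_t` is affine in `t` and the regression
`m^{p_t}(u, v)` is a ratio of two affine functions, so `t ↦ T_a(p_t)` is differentiable by the
product and quotient rules. Its derivative has three terms, coming from perturbing the
`u`-marginal, the `v`-marginal and the regression. Paired with the score `r = p S`, the three
non-constant terms of `ψ_a` reproduce exactly these three terms, and the constant `-2 T_a(p)`
drops out because `∑ r = 0`. Positivity of `p_t` for small `t` is continuity in `t`.
-/

open Finset

noncomputable section

variable {Y : Finset ℝ} {A U V : Type}
variable [Fintype A] [Fintype U] [Fintype V] [DecidableEq A]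

/-- Marginal of a pmf `q` on the mediator part `U`. -/
def pU (q : Y × A × U × V → ℝ) (u : U) : ℝ :=
  ∑ y : Y, ∑ a : A, ∑ v : V, q (y, a, u, v)

/-- Marginal of a pmf `q` on the non-mediator part `V`. -/
def pV (q : Y × A × U × V → ℝ) (v : V) : ℝ :=
  ∑ y : Y, ∑ a : A, ∑ u : U, q (y, a, u, v)

/-- Joint marginal of a pmf `q` on `(A, U, V)`. -/
def pAUV (q : Y × A × U × V → ℝ) (a : A) (u : U) (v : V) : ℝ :=
  ∑ y : Y, q (y, a, u, v)

/-- Outcome regression `m^q(u,v) = ∑_y y · q(y | a, u, v)`. -/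
def mReg (q : Y × A × U × V → ℝ) (a : A) (u : U) (v : V) : ℝ :=
  ∑ y : Y, (y : ℝ) * (q (y, a, u, v) / pAUV q a u v)

/-- Target parameter `T_a(q) = ∑_u q(u) ∑_v q(v) m^q(u,v)`. -/
def Ta (q : Y × A × U × V → ℝ) (a : A) : ℝ :=
  ∑ u : U, pU q u * ∑ v : V, pV q v * mReg q a u v

/-- Influence function of the adjusted functional for the WCDE,
computed from the base distribution `p`. -/
def psi (p : Y × A × U × V → ℝ) (a : A) : Y × A × U × V → ℝ :=
  fun (y, a', u, v) =>
    (if a' = a then (1 : ℝ) else 0) * (pU p u * pV p v / pAUV p a u v) *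
        ((y : ℝ) - mReg p a u v)
      + (∑ v' : V, pV p v' * mReg p a u v')
      + (∑ u' : U, pU p u' * mReg p a u' v)
      - 2 * Ta p a

open Filter Topology

theorem eventually_forall_pos_mul_one_add_mul {ι : Type*} [Finite ι] {p : ι → ℝ}
    (hp : ∀ i, 0 < p i) (S : ι → ℝ) :
    ∀ᶠ t in 𝓝 (0 : ℝ), ∀ i, 0 < p i * (1 + t * S i) := by
  refine eventually_all.2 fun i => ?_
  have h : Continuous fun t : ℝ => p i * (1 + t * S i) := by fun_prop
  exact (h.tendsto 0).eventually (lt_mem_nhds (by simpa using hp i))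

theorem sum_mul_one_add_mul {ι : Type*} [Fintype ι] {p S : ι → ℝ}
    (hp : ∑ i, p i = 1) (hS : ∑ i, p i * S i = 0) (t : ℝ) :
    ∑ i, p i * (1 + t * S i) = 1 := by
  simp only [mul_add, mul_one, sum_add_distrib, mul_left_comm _ t, ← mul_sum, hp, hS,
    mul_zero, add_zero]

theorem hasDerivAt_affine_div_affine {c : ℝ} (a b d : ℝ) (hc : c ≠ 0) :
    HasDerivAt (fun t => (a + t * b) / (c + t * d)) ((b - a / c * d) / c) 0 := by
  refine (((hasDerivAt_mul_const b).const_add a).fun_div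
    ((hasDerivAt_mul_const d).const_add c) (by rwa [zero_mul, add_zero])).congr_deriv ?_
  simp only [zero_mul, add_zero]
  field_simp

section ConditionalMean

omit [Fintype A] [Fintype U] [Fintype V] [DecidableEq A]

theorem pAUV_add_smul (q r : Y × A × U × V → ℝ) (t : ℝ) (a : A) (u : U) (v : V) :
    pAUV (q + t • r) a u v = pAUV q a u v + t * pAUV r a u v := by
  simp only [pAUV, Pi.add_apply, Pi.smul_apply, smul_eq_mul, sum_add_distrib, mul_sum]

theorem pAUV_pos [Nonempty Y] {q : Y × A × U × V → ℝ} (hq : ∀ o, 0 < q o) (a : A) (u : U)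
    (v : V) : 0 < pAUV q a u v :=
  sum_pos (fun _ _ => hq _) univ_nonempty

theorem mReg_eq_div (q : Y × A × U × V → ℝ) (a : A) (u : U) (v : V) :
    mReg q a u v = (∑ y : Y, (y : ℝ) * q (y, a, u, v)) / pAUV q a u v := by
  simp only [mReg, sum_div, mul_div_assoc]

-- The quotient-rule derivative of `m`, written in the form in which it appears in `ψ_a`.
def mRegDeriv (q r : Y × A × U × V → ℝ) (a : A) (u : U) (v : V) : ℝ :=
  ∑ y : Y, ((y : ℝ) - mReg q a u v) * r (y, a, u, v) / pAUV q a u v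

theorem hasDerivAt_mReg_add_smul {q : Y × A × U × V → ℝ} (r : Y × A × U × V → ℝ) {a : A}
    {u : U} {v : V} (hq : pAUV q a u v ≠ 0) :
    HasDerivAt (fun t : ℝ => mReg (q + t • r) a u v) (mRegDeriv q r a u v) 0 := by
  convert hasDerivAt_affine_div_affine (∑ y : Y, (y : ℝ) * q (y, a, u, v))
    (∑ y : Y, (y : ℝ) * r (y, a, u, v)) (pAUV r a u v) hq using 1
  · funext t
    simp only [mReg_eq_div, pAUV_add_smul, Pi.add_apply, Pi.smul_apply, smul_eq_mul, mul_add,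
      sum_add_distrib, mul_left_comm _ t, ← mul_sum]
  · simp only [mRegDeriv, ← sum_div, sub_mul, sum_sub_distrib, ← mul_sum, mReg_eq_div]
    rfl

end ConditionalMean

section Target

omit [DecidableEq A]

omit [Fintype U] in
theorem pU_add_smul (q r : Y × A × U × V → ℝ) (t : ℝ) (u : U) :
    pU (q + t • r) u = pU q u + t * pU r u := by
  simp only [pU, Pi.add_apply, Pi.smul_apply, smul_eq_mul, sum_add_distrib, mul_sum]

omit [Fintype V] in
theorem pV_add_smul (q r : Y × A × U × V → ℝ) (t : ℝ) (v : V) :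
    pV (q + t • r) v = pV q v + t * pV r v := by
  simp only [pV, Pi.add_apply, Pi.smul_apply, smul_eq_mul, sum_add_distrib, mul_sum]

theorem sum_mul_comp_eq_sum_pU (r : Y × A × U × V → ℝ) (f : U → ℝ) :
    ∑ o, r o * f o.2.2.1 = ∑ u, pU r u * f u := by
  simp only [pU, Fintype.sum_prod_type, sum_mul]
  exact sum_comm_cycle

theorem sum_mul_comp_eq_sum_pV (r : Y × A × U × V → ℝ) (f : V → ℝ) :
    ∑ o, r o * f o.2.2.2 = ∑ v, pV r v * f v := by
  simp only [pV, Fintype.sum_prod_type, sum_mul]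
  simp_rw [sum_comm (s := (univ : Finset U))]
  exact sum_comm_cycle

def TaDeriv (q r : Y × A × U × V → ℝ) (a : A) : ℝ :=
  ∑ u : U, (pU r u * ∑ v : V, pV q v * mReg q a u v
    + pU q u * ∑ v : V, (pV r v * mReg q a u v + pV q v * mRegDeriv q r a u v))

theorem hasDerivAt_Ta_add_smul {q : Y × A × U × V → ℝ} (r : Y × A × U × V → ℝ) {a : A}
    (hq : ∀ u v, pAUV q a u v ≠ 0) :
    HasDerivAt (fun t : ℝ => Ta (q + t • r) a) (TaDeriv q r a) 0 := by
  simp only [Ta, pU_add_smul, pV_add_smul]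
  refine HasDerivAt.fun_sum fun u _ => ?_
  have hv : HasDerivAt (fun t : ℝ => ∑ v : V, (pV q v + t * pV r v) * mReg (q + t • r) a u v)
      (∑ v : V, (pV r v * mReg q a u v + pV q v * mRegDeriv q r a u v)) 0 := by
    refine HasDerivAt.fun_sum fun v _ => ?_
    refine (((hasDerivAt_mul_const (pV r v)).const_add (pV q v)).fun_mul
      (hasDerivAt_mReg_add_smul r (hq u v))).congr_deriv ?_
    simp only [zero_mul, add_zero, zero_smul]
  refine (((hasDerivAt_mul_const (pU r u)).const_add (pU q u)).fun_mul hv).congr_deriv ?_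
  simp only [zero_mul, add_zero, zero_smul]

end Target

theorem sum_mul_ite_eq (r : Y × A × U × V → ℝ) (a : A) (g : Y → U → V → ℝ) :
    ∑ o, r o * (if o.2.1 = a then g o.1 o.2.2.1 o.2.2.2 else 0)
      = ∑ u, ∑ v, ∑ y, r (y, a, u, v) * g y u v := by
  simp only [Fintype.sum_prod_type, mul_ite, mul_zero, sum_ite_irrel, sum_const_zero,
    sum_ite_eq', mem_univ, if_true]
  rw [sum_comm]
  simp_rw [sum_comm (s := (univ : Finset Y))]

theorem sum_mul_psi_eq_TaDeriv {r : Y × A × U × V → ℝ} (hr : ∑ o, r o = 0)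
    (q : Y × A × U × V → ℝ) (a : A) : ∑ o, r o * psi q a o = TaDeriv q r a := by
  have hsplit : ∀ o, r o * psi q a o =
      r o * (if o.2.1 = a then pU q o.2.2.1 * pV q o.2.2.2 / pAUV q a o.2.2.1 o.2.2.2 *
          ((o.1 : ℝ) - mReg q a o.2.2.1 o.2.2.2) else 0)
        + r o * ∑ v, pV q v * mReg q a o.2.2.1 v
        + r o * ∑ u, pU q u * mReg q a u o.2.2.2
        - r o * (2 * Ta q a) := fun o => by
    unfold psi
    by_cases h : o.2.1 = a <;> simp only [h, if_true, if_false] <;> ring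
  have hm : ∑ o, r o * (if o.2.1 = a then pU q o.2.2.1 * pV q o.2.2.2 / pAUV q a o.2.2.1 o.2.2.2 *
          ((o.1 : ℝ) - mReg q a o.2.2.1 o.2.2.2) else 0)
      = ∑ u, pU q u * ∑ v, pV q v * mRegDeriv q r a u v := by
    refine (sum_mul_ite_eq r a fun y u v =>
      pU q u * pV q v / pAUV q a u v * ((y : ℝ) - mReg q a u v)).trans ?_
    simp only [mRegDeriv, mul_sum]
    exact sum_congr rfl fun u _ => sum_congr rfl fun v _ => sum_congr rfl fun y _ => by ring
  have hU : ∑ o, r o * ∑ v, pV q v * mReg q a o.2.2.1 v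
      = ∑ u, pU r u * ∑ v, pV q v * mReg q a u v :=
    sum_mul_comp_eq_sum_pU r fun u => ∑ v, pV q v * mReg q a u v
  have hV : ∑ o, r o * ∑ u, pU q u * mReg q a u o.2.2.2
      = ∑ u, pU q u * ∑ v, pV r v * mReg q a u v := by
    refine (sum_mul_comp_eq_sum_pV r fun v => ∑ u, pU q u * mReg q a u v).trans ?_
    simp only [mul_sum]
    rw [sum_comm]
    exact sum_congr rfl fun u _ => sum_congr rfl fun v _ => by ring
  simp only [hsplit, sum_add_distrib, sum_sub_distrib, hm, hU, hV, ← sum_mul, hr, zero_mul,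
    sub_zero, TaDeriv, mul_add]
  ring

/-- Pathwise differentiability of the WCDE functional along the
score-perturbed submodel `p_t = p · (1 + t·S)`:  for small `t` the
perturbation is a strictly positive pmf and the derivative of
`t ↦ T_a(p_t)` at `t = 0` equals `∑_o p(o)·ψ_a(o)·S(o)`. -/
theorem hasDerivAt_Ta_perturbed (p : Y × A × U × V → ℝ)
    (hpos : ∀ o, 0 < p o) (hsum : ∑ o, p o = 1) (a : A)
    (S : Y × A × U × V → ℝ) (hS : ∑ o, p o * S o = 0) :
    ∃ ε > (0 : ℝ),
      (∀ t : ℝ, |t| < ε →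
        (∀ o, 0 < p o * (1 + t * S o)) ∧
          ∑ o, p o * (1 + t * S o) = 1) ∧
      HasDerivAt (fun t : ℝ => Ta (fun o => p o * (1 + t * S o)) a)
        (∑ o, p o * psi p a o * S o) 0 := by
  have : Nonempty Y := by
    by_contra hY
    rw [not_nonempty_iff] at hY
    simp at hsum
  obtain ⟨ε, hε, hball⟩ :=
    Metric.eventually_nhds_iff.1 (eventually_forall_pos_mul_one_add_mul hpos S)
  refine ⟨ε, hε, fun t ht => ⟨hball (by rwa [Real.dist_0_eq_abs]),
    sum_mul_one_add_mul hsum hS t⟩, ?_⟩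
  have hline : ∀ t : ℝ, (fun o => p o * (1 + t * S o)) = p + t • fun o => p o * S o :=
    fun t => by ext o; simp only [Pi.add_apply, Pi.smul_apply, smul_eq_mul]; ring
  have hscore : ∑ o, p o * psi p a o * S o = TaDeriv p (fun o => p o * S o) a := by
    rw [← sum_mul_psi_eq_TaDeriv hS]
    exact sum_congr rfl fun o _ => by ring
  simp only [hline, hscore]
  exact hasDerivAt_Ta_add_smul _ fun u v => (pAUV_pos hpos a u v).ne'

end
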